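/- Let J be a finite set and let (Yᵗ)ₜ be a martingale with values in Δ(J) (the probability simplex on J) adapted to a filtration (Fₜ). Suppose there is c₁ > 0 such that for every t, conditionally on Fₜ, the probability that the support of Yᵗ⁺¹ is strictly contained in the support of Yᵗ is at least c₁ whenever the support of Yᵗ has more than one element. Then almost surely Yᵗ converges to a limit Y^∞ which is a Dirac measure (its support is a singleton). -/

import Mathlib

open MeasureTheory Filter Finset

/-! A nonnegative martingale that hits zero stays there, so almost surely the supports of `Yᵗ`
decrease and a path can shrink its support at most `|J|` times. Integrating the hypothesis gives
`c₁ · P(|supp Yᵗ| > 1) ≤ P(supp Yᵗ⁺¹ ⊂ supp Yᵗ)`, and summing over `t` bounds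
`∑ₜ P(|supp Yᵗ| > 1)` by `|J| / c₁`. Hence a.s. the support eventually is a singleton `{j}`, and
from then on `Yᵗ` is the Dirac mass at `j`. -/

open Classical in
theorem card_filter_ssubset_add_ncard_le {J : Type*} [Finite J] {S : ℕ → Set J}
    (hS : Antitone S) (T : ℕ) :
    #{t ∈ range T | S (t + 1) ⊂ S t} + (S T).ncard ≤ (S 0).ncard := by
  induction T with
  | zero => simp
  | succ T ih =>
    have hstep : (if S (T + 1) ⊂ S T then 1 else 0) + (S (T + 1)).ncard ≤ (S T).ncard := by
      split_ifs with h
      · have := Set.ncard_lt_ncard h (Set.toFinite _)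
        omega
      · simpa using Set.ncard_le_ncard (hS T.le_succ) (Set.toFinite _)
    rw [card_filter, sum_range_succ, ← card_filter]
    omega

theorem measurable_support {Ω J : Type*} {_ : MeasurableSpace Ω} {f : Ω → J → ℝ}
    (hf : ∀ j, Measurable fun ω => f ω j) : Measurable fun ω => Function.support (f ω) :=
  measurable_set_iff.2 fun j => ((hf j).eq_const 0).not

theorem measurableSet_support_ssubset {Ω J : Type*} [MeasurableSpace Ω] [Countable J]
    {f g : Ω → J → ℝ} (hf : Measurable fun ω => Function.support (f ω))
    (hg : Measurable fun ω => Function.support (g ω)) :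
    MeasurableSet {ω | Function.support (f ω) ⊂ Function.support (g ω)} := by
  simp only [Set.ssubset_def]
  exact measurableSet_setOfPred.2 ((hf.subset hg).and (hg.subset hf).not)

namespace MeasureTheory

theorem Supermartingale.ae_eq_zero_of_eq_zero {Ω ι : Type*} {m0 : MeasurableSpace Ω}
    {μ : Measure Ω} [Preorder ι] {ℱ : Filtration ι m0} [SigmaFiniteFiltration μ ℱ]
    {f : ι → Ω → ℝ} (hf : Supermartingale f ℱ μ) {i j : ι} (hij : i ≤ j)
    (hnonneg : 0 ≤ᵐ[μ] f j) : ∀ᵐ ω ∂μ, f i ω = 0 → f j ω = 0 := by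
  have hs : MeasurableSet[ℱ i] {ω | f i ω = 0} :=
    (hf.stronglyAdapted i).measurable (measurableSet_singleton 0)
  have hint : ∫ ω in {ω | f i ω = 0}, f j ω ∂μ = 0 := by
    refine le_antisymm ?_ (setIntegral_nonneg_of_ae hnonneg)
    calc ∫ ω in {ω | f i ω = 0}, f j ω ∂μ ≤ ∫ ω in {ω | f i ω = 0}, f i ω ∂μ :=
          hf.setIntegral_le hij hs
      _ = 0 := setIntegral_eq_zero_of_forall_eq_zero fun ω hω => hω
  have := (setIntegral_eq_zero_iff_of_nonneg_ae (ae_restrict_of_ae hnonneg)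
    (hf.integrable j).integrableOn).1 hint
  exact (ae_restrict_iff' (ℱ.le i _ hs)).1 this

theorem mul_measureReal_le_of_le_condExp_indicator {Ω : Type*} {m m0 : MeasurableSpace Ω}
    {μ : Measure Ω} [IsFiniteMeasure μ] (hm : m ≤ m0) {A D : Set Ω} (hA : MeasurableSet[m] A)
    (hD : MeasurableSet D) {c : ℝ}
    (hc : ∀ᵐ ω ∂μ, ω ∈ A → c ≤ (μ[D.indicator (fun _ => (1 : ℝ)) | m]) ω) :
    c * μ.real A ≤ μ.real D := by
  have hle : A.indicator (fun _ => c) ≤ᵐ[μ] μ[D.indicator (fun _ => (1 : ℝ)) | m] := by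
    filter_upwards [hc, condExp_nonneg (m := m) (Eventually.of_forall
      (Set.indicator_nonneg fun _ _ => zero_le_one (α := ℝ)))] with ω hcω hpos
    by_cases hω : ω ∈ A
    · simpa [hω] using hcω hω
    · simpa [hω] using hpos
  calc c * μ.real A = ∫ ω, A.indicator (fun _ => c) ω ∂μ := by
        rw [integral_indicator_const c (hm _ hA), smul_eq_mul, mul_comm]
    _ ≤ ∫ ω, (μ[D.indicator (fun _ => (1 : ℝ)) | m]) ω ∂μ :=
        integral_mono_ae ((integrable_const c).indicator (hm _ hA)) integrable_condExp hle
    _ = μ.real D := by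
        rw [integral_condExp hm]
        exact integral_indicator_one hD

open Classical in
theorem sum_measureReal_le_of_ae_card_le {Ω : Type*} {m0 : MeasurableSpace Ω}
    {μ : Measure Ω} [IsProbabilityMeasure μ] {D : ℕ → Set Ω} (hD : ∀ t, MeasurableSet (D t))
    {N : ℕ} (hN : ∀ᵐ ω ∂μ, ∀ T, #{t ∈ range T | ω ∈ D t} ≤ N) (T : ℕ) :
    ∑ t ∈ range T, μ.real (D t) ≤ N := by
  have hint : ∀ t, Integrable ((D t).indicator fun _ => (1 : ℝ)) μ :=
    fun t => (integrable_const 1).indicator (hD t)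
  calc ∑ t ∈ range T, μ.real (D t)
      = ∫ ω, ∑ t ∈ range T, (D t).indicator (fun _ => (1 : ℝ)) ω ∂μ := by
        rw [integral_finsetSum _ fun t _ => hint t]
        exact sum_congr rfl fun t _ => (integral_indicator_one (hD t)).symm
    _ ≤ ∫ _ω, (N : ℝ) ∂μ := by
        refine integral_mono_ae (integrable_finsetSum _ fun t _ => hint t) (integrable_const _) ?_
        filter_upwards [hN] with ω hω
        simp only [Set.indicator_apply, sum_boole]
        exact_mod_cast hω T
    _ = N := by simp

theorem measure_iInter_eq_zero_of_sum_measureReal_le {Ω : Type*} {m0 : MeasurableSpace Ω}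
    {μ : Measure Ω} [IsFiniteMeasure μ] {A : ℕ → Set Ω} {c C : ℝ} (hc : 0 < c)
    (hsum : ∀ T, c * ∑ t ∈ range T, μ.real (A t) ≤ C) : μ (⋂ t, A t) = 0 := by
  have hsummable : Summable fun t => μ.real (A t) :=
    summable_of_sum_range_le (fun t => measureReal_nonneg) fun T => by
      rw [le_div_iff₀' hc]; exact hsum T
  have hle : ∀ t, μ.real (⋂ t, A t) ≤ μ.real (A t) :=
    fun t => measureReal_mono (Set.iInter_subset A t)
  have := le_antisymm (ge_of_tendsto' hsummable.tendsto_atTop_zero hle) measureReal_nonneg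
  exact (measureReal_eq_zero_iff).1 this

end MeasureTheory

theorem eq_ite_of_support_subset_singleton {J : Type*} [Fintype J] [DecidableEq J]
    {p : J → ℝ} (hsum : ∑ i, p i = 1) {j : J} (hp : Function.support p ⊆ {j}) :
    p = fun i => if i = j then 1 else 0 := by
  have hzero : ∀ i, i ≠ j → p i = 0 := fun i hi =>
    Function.notMem_support.1 fun h => hi (hp h)
  have hj : p j = 1 := by
    rwa [sum_eq_single j (fun i _ hi => hzero i hi) (by simp)] at hsum
  funext i
  split_ifs with h
  · exact h ▸ hj
  · exact hzero i h

theorem exists_eventually_eq_ite_of_antitone_support {J : Type*} [Fintype J] [DecidableEq J]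
    {p : ℕ → J → ℝ} (hsum : ∀ t, ∑ i, p t i = 1)
    (hanti : Antitone fun t => Function.support (p t))
    {t₀ : ℕ} (ht₀ : (Function.support (p t₀)).ncard ≤ 1) :
    ∃ j, ∀ᶠ t in atTop, p t = fun i => if i = j then 1 else 0 := by
  have hne : (Function.support (p t₀)).Nonempty := by
    rw [Function.support_nonempty_iff]
    intro h
    simpa [h] using hsum t₀
  obtain ⟨j, hj⟩ := Set.ncard_eq_one.1
    (le_antisymm ht₀ ((Set.ncard_pos (Set.toFinite _)).2 hne))
  exact ⟨j, eventually_atTop.2 ⟨t₀, fun t ht =>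
    eq_ite_of_support_subset_singleton (hsum t) (hj ▸ hanti ht)⟩⟩

theorem stmt_8_general {Ω : Type*} {m : MeasurableSpace Ω} (μ : Measure Ω)
    [IsProbabilityMeasure μ] (ℱ : Filtration ℕ m)
    {J : Type*} [Fintype J] [DecidableEq J]
    (Y : ℕ → Ω → J → ℝ)
    (hsimplex : ∀ t ω, (∀ j, 0 ≤ Y t ω j) ∧ ∑ j, Y t ω j = 1)
    (hmart : ∀ j, Martingale (fun t ω => Y t ω j) ℱ μ)
    (c₁ : ℝ) (hc₁ : 0 < c₁)
    (hshrink : ∀ t, ∀ᵐ ω ∂μ,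
      1 < (Function.support (Y t ω)).ncard →
        c₁ ≤ (μ[Set.indicator {ω' | Function.support (Y (t + 1) ω') ⊂
                Function.support (Y t ω')} (fun _ => (1 : ℝ)) | ℱ t]) ω) :
    ∀ᵐ ω ∂μ, ∃ j : J,
      Tendsto (fun t => Y t ω) atTop
        (nhds (fun i => if i = j then (1 : ℝ) else 0)) := by
  have hS : ∀ t, Measurable[ℱ t] fun ω => Function.support (Y t ω) := fun t =>
    measurable_support fun j => ((hmart j).stronglyAdapted t).measurable
  have hD : ∀ t, MeasurableSet
      {ω | Function.support (Y (t + 1) ω) ⊂ Function.support (Y t ω)} := fun t =>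
    measurableSet_support_ssubset ((hS (t + 1)).mono (ℱ.le _) le_rfl) ((hS t).mono (ℱ.le t) le_rfl)
  have hanti : ∀ᵐ ω ∂μ, Antitone fun t => Function.support (Y t ω) := by
    have := fun t j => (hmart j).supermartingale.ae_eq_zero_of_eq_zero t.le_succ
      (Eventually.of_forall fun ω => (hsimplex (t + 1) ω).1 j)
    filter_upwards [ae_all_iff.2 fun t => ae_all_iff.2 (this t)] with ω hω
    exact antitone_nat_of_succ_le fun t j hj h0 => hj (hω t j h0)
  have hsum : ∀ T, c₁ * ∑ t ∈ range T, μ.real {ω | 1 < (Function.support (Y t ω)).ncard} ≤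
      Fintype.card J := by
    intro T
    rw [mul_sum]
    refine (sum_le_sum fun t _ => mul_measureReal_le_of_le_condExp_indicator (ℱ.le t)
      ((hS t) (Set.toFinite {s : Set J | 1 < s.ncard}).measurableSet) (hD t) (hshrink t)).trans
      (sum_measureReal_le_of_ae_card_le hD ?_ T)
    filter_upwards [hanti] with ω hω T
    calc _ ≤ (Function.support (Y 0 ω)).ncard :=
          Nat.le_of_add_right_le (card_filter_ssubset_add_ncard_le hω T)
      _ ≤ Fintype.card J := Nat.card_eq_fintype_card (α := J) ▸ Set.ncard_le_card _
  have hfinal : ∀ᵐ ω ∂μ, ∃ t, (Function.support (Y t ω)).ncard ≤ 1 := by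
    refine ae_iff.2 (measure_mono_null (fun ω hω => ?_)
      (measure_iInter_eq_zero_of_sum_measureReal_le hc₁ hsum))
    exact Set.mem_iInter.2 fun t => not_le.1 fun h => hω ⟨t, h⟩
  filter_upwards [hanti, hfinal] with ω hω ⟨t₀, ht₀⟩
  obtain ⟨j, hj⟩ := exists_eventually_eq_ite_of_antitone_support (fun t => (hsimplex t ω).2) hω ht₀
  exact ⟨j, tendsto_const_nhds.congr' (hj.mono fun t ht => ht.symm)⟩

/-- a simplex-valued martingale whose support shrinks with
conditional probability at least `c₁ > 0` while it is not a singleton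
converges a.s. to a Dirac measure. -/
theorem stmt_8 {Ω : Type*} {m : MeasurableSpace Ω} (μ : Measure Ω)
    [IsProbabilityMeasure μ] (ℱ : Filtration ℕ m)
    {J : Type*} [Fintype J] [DecidableEq J] [Nonempty J]
    (Y : ℕ → Ω → J → ℝ)
    (hsimplex : ∀ t ω, (∀ j, 0 ≤ Y t ω j) ∧ ∑ j, Y t ω j = 1)
    (hmart : ∀ j, Martingale (fun t ω => Y t ω j) ℱ μ)
    (c₁ : ℝ) (hc₁ : 0 < c₁)
    (hshrink : ∀ t, ∀ᵐ ω ∂μ,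
      1 < (Function.support (Y t ω)).ncard →
        c₁ ≤ (μ[Set.indicator {ω' | Function.support (Y (t + 1) ω') ⊂
                Function.support (Y t ω')} (fun _ => (1 : ℝ)) | ℱ t]) ω) :
    ∀ᵐ ω ∂μ, ∃ j : J,
      Tendsto (fun t => Y t ω) atTop
        (nhds (fun i => if i = j then (1 : ℝ) else 0)) :=
  stmt_8_general μ ℱ Y hsimplex hmart c₁ hc₁ hshrink
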